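/- Consider a column of n rows taking values in a set of n_i distinct values, arranged so that equal values occupy consecutive rows (a sorted column). Let each value v be assigned an injective code(v) ∈ {0,1}^L, and suppose that for every two values that occur in consecutive (adjacent) runs of the column, the Hamming distance between their codes is exactly 2. Fix a word length w ≥ 1 with w dividing n, and for each bitmap position p ∈ {1,…,L} form the bitmap whose r-th bit is the p-th bit of the code of the value in row r. Define the storage cost of the L bitmaps as the total number of dirty words plus the total number of maximal runs of consecutive identical clean words (counted within each bitmap separately). Then the storage cost is at most 4·n_i + L. -/

import Mathlib

/-- Within bitmap `p`, word `q` is clean when all `w` of its bits are equal. -/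
def cleanWord (w : ℕ) (bit : ℕ → Bool) (q : ℕ) : Prop :=
  ∀ j ∈ Finset.range w, bit (q * w + j) = bit (q * w)

instance (w : ℕ) (bit : ℕ → Bool) (q : ℕ) : Decidable (cleanWord w bit q) := by
  unfold cleanWord; infer_instance

/-- Word `q` starts a maximal run of consecutive identical clean words in the bitmap
with bits `bit`: it is clean, and either it is the first word, or the previous word
is not clean, or the previous word is a clean word of the other kind. -/
def runStart (w : ℕ) (bit : ℕ → Bool) (q : ℕ) : Prop :=
  cleanWord w bit q ∧
    (q = 0 ∨ ¬ cleanWord w bit (q - 1) ∨ bit ((q - 1) * w) ≠ bit (q * w))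

instance (w : ℕ) (bit : ℕ → Bool) (q : ℕ) : Decidable (runStart w bit q) := by
  unfold runStart; infer_instance

/-!
A bitmap can only change between rows `r` and `r + 1` where the column changes value, and at
each such row exactly two of the `L` bitmaps change. Sortedness makes every value start at most
one new run, so the column changes value at most `nI` times and the bitmaps have at most `2 nI`
change points altogether. Within one bitmap every dirty word contains a change point, and every
run of clean words other than the first starts right after a word containing one; hence a bitmap
with `c` change points costs at most `2 c + 1`.
-/

open Finset

def changePoints {α : Type*} [DecidableEq α] (f : ℕ → α) (n : ℕ) : Finset ℕ :=
  (range (n - 1)).filter fun r => f r ≠ f (r + 1)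

lemma mul_add_le_of_lt_div {q n w : ℕ} (h : q < n / w) : q * w + w ≤ n := by
  have h₁ := Nat.mul_le_mul_right w h
  have h₂ := Nat.div_mul_le_self n w
  rw [Nat.succ_mul] at h₁
  omega

lemma exists_ne_succ_of_ne {α : Type*} {f : ℕ → α} {a b : ℕ} (hab : a ≤ b) (h : f a ≠ f b) :
    ∃ r, a ≤ r ∧ r < b ∧ f r ≠ f (r + 1) := by
  induction b, hab using Nat.le_induction with
  | base => exact absurd rfl h
  | succ b hab ih =>
    by_cases hb : f b = f (b + 1)
    · obtain ⟨r, har, hrb, hr⟩ := ih (hb ▸ h)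
      exact ⟨r, har, by omega, hr⟩
    · exact ⟨b, hab, by omega, hb⟩

section Bitmap

variable {w n : ℕ} {bit : ℕ → Bool}

lemma mem_image_div_changePoints {q r : ℕ} (hqr : q * w ≤ r) (hrq : r < q * w + w)
    (hrn : r + 1 < n) (hr : bit r ≠ bit (r + 1)) :
    q ∈ (changePoints bit n).image (· / w) := by
  refine mem_image.2 ⟨r, mem_filter.2 ⟨mem_range.2 (by omega), hr⟩, ?_⟩
  exact Nat.div_eq_of_lt_le hqr (by rwa [Nat.succ_mul])

lemma mem_image_div_changePoints_of_not_cleanWord {q : ℕ} (hq : q < n / w)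
    (hdirty : ¬ cleanWord w bit q) : q ∈ (changePoints bit n).image (· / w) := by
  obtain ⟨j, hj, hne⟩ : ∃ j < w, bit (q * w + j) ≠ bit (q * w) := by
    simpa [cleanWord] using hdirty
  obtain ⟨r, hqr, hrj, hr⟩ := exists_ne_succ_of_ne (Nat.le_add_right (q * w) j) (Ne.symm hne)
  have := mul_add_le_of_lt_div hq
  exact mem_image_div_changePoints hqr (by omega) (by omega) hr

lemma filter_not_cleanWord_subset :
    (range (n / w)).filter (fun q => ¬ cleanWord w bit q) ⊆
      (changePoints bit n).image (· / w) := fun q hq => by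
  rw [mem_filter, mem_range] at hq
  exact mem_image_div_changePoints_of_not_cleanWord hq.1 hq.2

/-- A run starting at word `q > 0` witnesses a change point inside word `q - 1`: that word is
either dirty or clean of the other kind. -/
lemma filter_runStart_subset :
    (range (n / w)).filter (fun q => runStart w bit q) ⊆
      insert 0 ((changePoints bit n).image (· / w + 1)) := by
  intro q hq
  rw [mem_filter, mem_range] at hq
  obtain ⟨hqn, -, hstart⟩ := hq
  rcases Nat.eq_zero_or_pos q with rfl | hq0
  · exact mem_insert_self _ _
  have hprev : q - 1 ∈ (changePoints bit n).image (· / w) := by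
    have hqn' : q - 1 < n / w := by omega
    rcases hstart with h | h | h
    · omega
    · exact mem_image_div_changePoints_of_not_cleanWord hqn' h
    · have hw : 0 < w := Nat.pos_of_ne_zero (by rintro rfl; simp at hqn)
      have hqw : (q - 1) * w + w = q * w := by
        rw [← Nat.succ_mul, Nat.succ_eq_add_one, Nat.sub_add_cancel hq0]
      obtain ⟨r, hqr, hrq, hr⟩ :=
        exists_ne_succ_of_ne (Nat.mul_le_mul_right w (Nat.sub_le q 1)) h
      have := mul_add_le_of_lt_div hqn
      exact mem_image_div_changePoints hqr (by omega) (by omega) hr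
  obtain ⟨r, hr, hrq⟩ := mem_image.1 hprev
  exact mem_insert_of_mem (mem_image.2 ⟨r, hr, by omega⟩)

lemma card_dirty_add_card_runStart_le :
    ((range (n / w)).filter (fun q => ¬ cleanWord w bit q)).card +
      ((range (n / w)).filter (fun q => runStart w bit q)).card ≤
      1 + 2 * (changePoints bit n).card := by
  have hdirty := (card_le_card (filter_not_cleanWord_subset (w := w) (n := n) (bit := bit))).trans
    card_image_le
  have hrun := ((card_le_card (filter_runStart_subset (w := w) (n := n) (bit := bit))).trans
    (card_insert_le _ _)).trans (Nat.add_le_add_right card_image_le 1)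
  omega

end Bitmap

lemma card_changePoints_le_card {α : Type*} [Fintype α] [DecidableEq α] {n : ℕ} (f : ℕ → α)
    (hsorted : ∀ a b c : ℕ, a ≤ b → b ≤ c → c < n → f a = f c → f a = f b) :
    (changePoints f n).card ≤ Fintype.card α := by
  have hlt : ∀ r ∈ changePoints f n, ∀ s ∈ changePoints f n, r < s → f (r + 1) ≠ f (s + 1) := by
    intro r hr s hs hrs heq
    simp only [changePoints, mem_filter, mem_range] at hr hs
    exact hs.2 ((hsorted (r + 1) s (s + 1) (by omega) (by omega) (by omega) heq).symm.trans heq)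
  refine card_le_card_of_injOn (fun r => f (r + 1)) (fun _ _ => mem_univ _) ?_
  intro r hr s hs heq
  rcases lt_trichotomy r s with h | h | h
  · exact absurd heq (hlt r hr s hs h)
  · exact h
  · exact absurd heq.symm (hlt s hs r hr h)

lemma sum_card_changePoints_eq_sum_hammingDist {ι β : Type*} [Fintype ι] [DecidableEq β]
    (g : ℕ → ι → β) (n : ℕ) :
    ∑ i, (changePoints (fun r => g r i) n).card =
      ∑ r ∈ range (n - 1), hammingDist (g r) (g (r + 1)) := by
  simp only [changePoints, hammingDist, card_filter]
  exact sum_comm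

lemma sum_hammingDist_eq_two_mul_card_changePoints {α ι β : Type*} [DecidableEq α] [Fintype ι]
    [DecidableEq β] {n : ℕ} (val : ℕ → α) (code : α → ι → β)
    (hadj : ∀ r : ℕ, r + 1 < n → val r ≠ val (r + 1) →
      hammingDist (code (val r)) (code (val (r + 1))) = 2) :
    ∑ r ∈ range (n - 1), hammingDist (code (val r)) (code (val (r + 1))) =
      2 * (changePoints val n).card := by
  rw [changePoints, card_filter, mul_sum]
  refine sum_congr rfl fun r hr => ?_
  split_ifs with h
  · rw [hadj r (by simp at hr; omega) h, mul_one]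
  · simp [not_not.1 h]

theorem storage_cost_le_of_sorted_column_general (n nI L w : ℕ)
    (val : ℕ → Fin nI) (code : Fin nI → Fin L → Bool)
    (hsorted : ∀ a b c : ℕ, a ≤ b → b ≤ c → c < n → val a = val c → val a = val b)
    (hadj : ∀ r : ℕ, r + 1 < n → val r ≠ val (r + 1) →
      hammingDist (code (val r)) (code (val (r + 1))) = 2) :
    (∑ p : Fin L,
      ((Finset.range (n / w)).filter (fun q =>
        ¬ cleanWord w (fun r => code (val r) p) q)).card)
    + (∑ p : Fin L,
      ((Finset.range (n / w)).filter (fun q =>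
        runStart w (fun r => code (val r) p) q)).card)
      ≤ 4 * nI + L := by
  have hchanges : (changePoints val n).card ≤ nI := by
    simpa using card_changePoints_le_card val hsorted
  rw [← sum_add_distrib]
  calc _ ≤ ∑ p : Fin L, (1 + 2 * (changePoints (fun r => code (val r) p) n).card) :=
        sum_le_sum fun p _ => card_dirty_add_card_runStart_le
    _ = L + 2 * (2 * (changePoints val n).card) := by
        rw [sum_add_distrib, ← mul_sum,
          sum_card_changePoints_eq_sum_hammingDist (fun r => code (val r)),
          sum_hammingDist_eq_two_mul_card_changePoints val code hadj]
        simp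
    _ ≤ 4 * nI + L := by omega

/-- A sorted column of `n` rows (`w ∣ n`, `w ≥ 1`) with values among `nI` distinct
values (`val`), where equal values occupy consecutive rows, encoded by an injective
code `Fin nI → Fin L → Bool` such that values in adjacent runs have codes at
Hamming distance exactly `2`. The `p`-th bitmap has `r`-th bit `code (val r) p`
and is partitioned into `n / w` words of `w` consecutive bits; a word is dirty if
its bits are not all equal. The storage cost—the total number of dirty words plus
the total number of maximal runs of consecutive identical clean words, over all
`L` bitmaps—is at most `4 · nI + L`. -/
theorem storage_cost_le_of_sorted_column (n nI L w : ℕ) (hw : 1 ≤ w) (hdvd : w ∣ n)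
    (val : ℕ → Fin nI) (code : Fin nI → Fin L → Bool)
    (hinj : Function.Injective code)
    (hsorted : ∀ a b c : ℕ, a ≤ b → b ≤ c → c < n → val a = val c → val a = val b)
    (hadj : ∀ r : ℕ, r + 1 < n → val r ≠ val (r + 1) →
      hammingDist (code (val r)) (code (val (r + 1))) = 2) :
    (∑ p : Fin L,
      ((Finset.range (n / w)).filter (fun q =>
        ¬ cleanWord w (fun r => code (val r) p) q)).card)
    + (∑ p : Fin L,
      ((Finset.range (n / w)).filter (fun q =>
        runStart w (fun r => code (val r) p) q)).card)
      ≤ 4 * nI + L :=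
  storage_cost_le_of_sorted_column_general n nI L w val code hsorted hadj
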